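/- arXiv:1605.07775 — 5 statements merged into one kernel-verified Lean document; each statement's English description precedes it below -/
import Mathlib

section
/- For any nested Lie bracket [B_{n₁·…·n_r}] = [...[[B_{n₁},B_{n₂}],B_{n₃}],...,B_{n_r}] of homogeneous differential operators B_{n_j} = x^{n_j¹} y^{n_j²}(p_{n_j} x∂_x + q_{n_j} y∂_y), the result has the form x^{Σn_j¹} y^{Σn_j²}(P(n) x∂_x + Q(n) y∂_y), where P(n) and Q(n) are polynomials with integer coefficients in the p_{n_j}, q_{n_j} which are homogeneous of degree r (the length of the word), satisfying the recursion P(n·n') = (|n'|¹ − n¹) p_n P(n') + |n'|² q_n P(n') − n² p_n Q(n'), Q(n·n') = (|n'|² − n²) q_n Q(n') + |n'|¹ p_n Q(n') − n¹ q_n P(n'), where |n'|^j denotes the sum of the j-th components of the letters of n'. -/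
open MvPolynomial

/-- Planar polynomial vector fields: a pair `(A₁, A₂)` represents `A₁ ∂_x + A₂ ∂_y`. -/
abbrev PlanarVF := MvPolynomial (Fin 2) ℂ × MvPolynomial (Fin 2) ℂ

/-- The Lie bracket `[A,B] = A∘B − B∘A` of derivations, in components. -/
noncomputable def lieVF (A B : PlanarVF) : PlanarVF :=
  (A.1 * pderiv 0 B.1 + A.2 * pderiv 1 B.1 - B.1 * pderiv 0 A.1 - B.2 * pderiv 1 A.1,
   A.1 * pderiv 0 B.2 + A.2 * pderiv 1 B.2 - B.1 * pderiv 0 A.2 - B.2 * pderiv 1 A.2)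

/-- A letter together with its coefficients: `((n¹,n²),(p_n,q_n))` represents the
homogeneous operator `B_n = x^{n¹} y^{n²} (p_n x∂_x + q_n y∂_y)`. -/
abbrev Letter := (ℕ × ℕ) × (ℂ × ℂ)

/-- The homogeneous differential operator attached to a letter. -/
noncomputable def Bop (a : Letter) : PlanarVF :=
  (C a.2.1 * X 0 ^ (a.1.1 + 1) * X 1 ^ a.1.2, C a.2.2 * X 0 ^ a.1.1 * X 1 ^ (a.1.2 + 1))

/-- The nested Lie bracket `[B_{n₁·…·n_r}]` of the operators of a (nonempty) word. -/
noncomputable def nestedBracket : Letter → List Letter → PlanarVF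
  | a, [] => Bop a
  | a, b :: t => lieVF (Bop a) (nestedBracket b t)

/-- Sum of the first components of the letters of a word, `|n|¹`. -/
def S1 (w : List Letter) : ℕ := (w.map fun a => a.1.1).sum

/-- Sum of the second components of the letters of a word, `|n|²`. -/
def S2 (w : List Letter) : ℕ := (w.map fun a => a.1.2).sum

/-- The coefficient polynomials `(P(n), Q(n))`, defined by the recursion
`P(n·n') = (|n'|¹ − n¹) p_n P(n') + |n'|² q_n P(n') − n² p_n Q(n')`,
`Q(n·n') = (|n'|² − n²) q_n Q(n') + |n'|¹ p_n Q(n') − n¹ q_n P(n')`. -/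
def PQ : Letter → List Letter → ℂ × ℂ
  | a, [] => (a.2.1, a.2.2)
  | a, b :: t =>
    let r := PQ b t
    ((((S1 (b :: t) : ℂ)) - (a.1.1 : ℂ)) * a.2.1 * r.1 + (S2 (b :: t) : ℂ) * a.2.2 * r.1
        - (a.1.2 : ℂ) * a.2.1 * r.2,
     (((S2 (b :: t) : ℂ)) - (a.1.2 : ℂ)) * a.2.2 * r.2 + (S1 (b :: t) : ℂ) * a.2.1 * r.2
        - (a.1.1 : ℂ) * a.2.2 * r.1)

/-! Write vector fields in the frame `x∂_x, y∂_y`. These two fields commute and act on the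
monomial `x^m y^k` by the scalars `m` and `k`, so the bracket of `x^m y^k (p x∂_x + q y∂_y)` with
`x^{m'} y^{k'} (P x∂_x + Q y∂_y)` is again of this form, with exponents `(m + m', k + k')` and with
the coefficients of the recursion defining `PQ`. Induction on the word gives the form of the
nested bracket. The recursion is bilinear in `(p_n, q_n)` and `(P(n'), Q(n'))`, which gives
homogeneity by the same induction. -/
lemma lieVF_X_mul (a b c d : MvPolynomial (Fin 2) ℂ) :
    lieVF (X 0 * a, X 1 * b) (X 0 * c, X 1 * d) =
      (X 0 * (a * (X 0 * pderiv 0 c) + b * (X 1 * pderiv 1 c)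
          - c * (X 0 * pderiv 0 a) - d * (X 1 * pderiv 1 a)),
       X 1 * (a * (X 0 * pderiv 0 d) + b * (X 1 * pderiv 1 d)
          - c * (X 0 * pderiv 0 b) - d * (X 1 * pderiv 1 b))) := by
  have h01 : (0 : Fin 2) ≠ 1 := by decide
  simp only [lieVF, Derivation.leibniz, pderiv_X_self, pderiv_X_of_ne h01, pderiv_X_of_ne h01.symm,
    smul_eq_mul, Prod.mk.injEq]
  constructor <;> ring

section Euler

variable {R σ : Type*} [CommSemiring R] {i j : σ}

lemma X_mul_pderiv_C_mul_X_pow_mul_X_pow (hij : i ≠ j) (c : R) (m k : ℕ) :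
    X i * pderiv i (C c * X i ^ m * X j ^ k) = C (c * m) * X i ^ m * X j ^ k := by
  cases m with
  | zero => simp [pderiv_X_of_ne hij.symm]
  | succ m =>
    simp [Derivation.leibniz, Derivation.leibniz_pow, pderiv_X_of_ne hij.symm]
    ring

lemma X_mul_pderiv_C_mul_X_pow_mul_X_pow' (hij : i ≠ j) (c : R) (m k : ℕ) :
    X j * pderiv j (C c * X i ^ m * X j ^ k) = C (c * k) * X i ^ m * X j ^ k := by
  rw [mul_right_comm, X_mul_pderiv_C_mul_X_pow_mul_X_pow hij.symm, mul_right_comm]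

end Euler

lemma Bop_eq_X_mul (a : Letter) :
    Bop a = (X 0 * (C a.2.1 * X 0 ^ a.1.1 * X 1 ^ a.1.2),
      X 1 * (C a.2.2 * X 0 ^ a.1.1 * X 1 ^ a.1.2)) := by
  simp only [Bop, Prod.mk.injEq]
  constructor <;> ring

def bracketLetter (a b : Letter) : Letter :=
  ((a.1.1 + b.1.1, a.1.2 + b.1.2),
   (((b.1.1 : ℂ) - a.1.1) * a.2.1 * b.2.1 + b.1.2 * a.2.2 * b.2.1 - a.1.2 * a.2.1 * b.2.2,
    ((b.1.2 : ℂ) - a.1.2) * a.2.2 * b.2.2 + b.1.1 * a.2.1 * b.2.2 - a.1.1 * a.2.2 * b.2.1))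

theorem lieVF_Bop (a b : Letter) : lieVF (Bop a) (Bop b) = Bop (bracketLetter a b) := by
  rw [Bop_eq_X_mul, Bop_eq_X_mul, lieVF_X_mul]
  have h01 : (0 : Fin 2) ≠ 1 := by decide
  simp only [X_mul_pderiv_C_mul_X_pow_mul_X_pow h01, X_mul_pderiv_C_mul_X_pow_mul_X_pow' h01]
  rw [Bop_eq_X_mul]
  simp only [bracketLetter, Prod.mk.injEq, map_add, map_sub, map_mul, map_natCast]
  constructor <;> ring

def wordLetter (a : Letter) (w : List Letter) : Letter := ((S1 (a :: w), S2 (a :: w)), PQ a w)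

lemma S1_cons (a : Letter) (w : List Letter) : S1 (a :: w) = a.1.1 + S1 w := by simp [S1]

lemma S2_cons (a : Letter) (w : List Letter) : S2 (a :: w) = a.1.2 + S2 w := by simp [S2]

lemma wordLetter_cons (a b : Letter) (w : List Letter) :
    wordLetter a (b :: w) = bracketLetter a (wordLetter b w) := by
  rw [wordLetter, S1_cons a, S2_cons a]
  rfl

theorem nestedBracket_eq_Bop (a : Letter) (w : List Letter) :
    nestedBracket a w = Bop (wordLetter a w) := by
  induction w generalizing a with
  | nil => rfl
  | cons b w ih => rw [nestedBracket, ih, lieVF_Bop, wordLetter_cons]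

lemma S1_map_of_fst {f : Letter → Letter} (hf : ∀ b, (f b).1 = b.1) (w : List Letter) :
    S1 (w.map f) = S1 w := by
  simp [S1, Function.comp_def, hf]

lemma S2_map_of_fst {f : Letter → Letter} (hf : ∀ b, (f b).1 = b.1) (w : List Letter) :
    S2 (w.map f) = S2 w := by
  simp [S2, Function.comp_def, hf]

theorem PQ_homogeneous (t : ℂ) (a : Letter) (w : List Letter) :
    PQ (a.1, (t * a.2.1, t * a.2.2)) (w.map fun b => (b.1, (t * b.2.1, t * b.2.2))) =
      (t ^ (w.length + 1) * (PQ a w).1, t ^ (w.length + 1) * (PQ a w).2) := by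
  induction w generalizing a with
  | nil => simp [PQ]
  | cons b w ih =>
    have hS1 : S1 (w.map fun b => (b.1, (t * b.2.1, t * b.2.2))) = S1 w :=
      S1_map_of_fst (fun _ => by rfl) w
    have hS2 : S2 (w.map fun b => (b.1, (t * b.2.1, t * b.2.2))) = S2 w :=
      S2_map_of_fst (fun _ => by rfl) w
    simp only [List.map_cons, PQ, S1_cons, S2_cons, hS1, hS2, ih, List.length_cons,
      Prod.mk.injEq]
    constructor <;> ring

/-- Any nested Lie bracket of homogeneous differential operators has the form
`x^{Σ n_j¹} y^{Σ n_j²} (P(n) x∂_x + Q(n) y∂_y)`, where `P(n)`, `Q(n)` satisfy the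
recursion of `PQ` and are homogeneous of degree `r` (the length of the word) in the
coefficients `p_{n_j}, q_{n_j}`. -/
theorem nested_bracket_form (a : Letter) (w : List Letter) :
    (nestedBracket a w =
      (C (PQ a w).1 * X 0 ^ (S1 (a :: w) + 1) * X 1 ^ S2 (a :: w),
       C (PQ a w).2 * X 0 ^ S1 (a :: w) * X 1 ^ (S2 (a :: w) + 1))) ∧
    (∀ t : ℂ,
      PQ (a.1, (t * a.2.1, t * a.2.2)) (w.map fun b => (b.1, (t * b.2.1, t * b.2.2))) =
        (t ^ (w.length + 1) * (PQ a w).1, t ^ (w.length + 1) * (PQ a w).2)) :=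
  ⟨nestedBracket_eq_Bop a w, fun t => PQ_homogeneous t a w⟩
end

section
/- The length-3 correction mould value at a resonant word is Carr^{n₁·n₂·n₃} = 1/(ω(n₁)(ω(n₁)+ω(n₂))) when ω(n₁)+ω(n₂)+ω(n₃) = 0, ω(n₁) ≠ 0, and ω(n₁)+ω(n₂) ≠ 0, given the mould values in lengths 0, 1, and 2 and the variance recursion. -/
/-- The length-1 universal correction function: `C₁(z) = 1` if `z = 0`, else `0`. -/
noncomputable def C1 (z : ℂ) : ℂ := if z = 0 then 1 else 0

/-- The length-2 universal correction function:
`C₂(z₁,z₂) = −1/z₁` if `z₁ + z₂ = 0` and `z₁ ≠ 0`, else `0`. -/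
noncomputable def C2 (z1 z2 : ℂ) : ℂ := if z1 + z2 = 0 ∧ z1 ≠ 0 then -(1 / z1) else 0

/-!
Only one term of the variance recursion survives at such a word: the letters `n₁`, `n₂` are
non-resonant, so both products on the right vanish, while `(n₁+n₂)·n₃` is a resonant word of
length two. The recursion then reads `ω(n₁)·Carr^{n₁·n₂·n₃} = 1/(ω(n₁)+ω(n₂))`.
-/

lemma C1_of_ne_zero {z : ℂ} (hz : z ≠ 0) : C1 z = 0 := if_neg hz

lemma C2_of_add_eq_zero {z1 z2 : ℂ} (h : z1 + z2 = 0) (hz1 : z1 ≠ 0) :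
    C2 z1 z2 = -(1 / z1) :=
  if_pos ⟨h, hz1⟩

/-- Given the mould values in lengths `0`, `1`, `2` and the variance recursion
`ω(n₁)·Carr^{n₁,n₂,n₃} + Carr^{(n₁+n₂),n₃} = Carr^{n₁·n₃}·Carr^{n₂} + Carr^{n₁}·Carr^{n₂·n₃}`,
the length-3 correction mould on a resonant word (whose letters are non-resonant) with
`ω(n₁)+ω(n₂)+ω(n₃) = 0`, `ω(n₁) ≠ 0`, `ω(n₁)+ω(n₂) ≠ 0` is
`Carr^{n₁·n₂·n₃} = 1/(ω(n₁)(ω(n₁)+ω(n₂)))`. -/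
theorem length_three_correction_mould (Carr3 : ℂ → ℂ → ℂ → ℂ)
    (hvar : ∀ z1 z2 z3 : ℂ,
      z1 * Carr3 z1 z2 z3 + C2 (z1 + z2) z3 = C2 z1 z3 * C1 z2 + C1 z1 * C2 z2 z3) :
    ∀ z1 z2 z3 : ℂ, z1 + z2 + z3 = 0 → z1 ≠ 0 → z1 + z2 ≠ 0 → z2 ≠ 0 →
      Carr3 z1 z2 z3 = 1 / (z1 * (z1 + z2)) := by
  intro z1 z2 z3 hsum h1 h12 h2
  have h := hvar z1 z2 z3
  rw [C2_of_add_eq_zero hsum h12, C1_of_ne_zero h1, C1_of_ne_zero h2] at h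
  have hCarr : z1 * Carr3 z1 z2 z3 = 1 / (z1 + z2) := by linear_combination h
  rw [mul_comm, ← div_div, ← hCarr, mul_div_cancel_left₀ _ h1]
end

section
/- The correction mould vanishes on non-resonant words: if ω(n₁·…·n_r) = Σ_j ω(n_j) ≠ 0, then Carr^{n₁·…·n_r} = 0. -/
/-!
Summing the letters of each block of a decomposition of `w` preserves the total weight, so on a
non-resonant word every term of `M ∘ N` vanishes. Hence `(I − M) ∘ N = I ∘ N = N` there, and by
induction every iterate of `I − M` equals `I` on non-resonant words; the defining relation of
`Carr` then forces `Carr^w = 0`.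
-/

/-- A mould over the alphabet of complex weights: a function on words (lists of weights). -/
abbrev Mould := List ℂ → ℂ

/-- The unit mould for composition: `I^n = 1` if `n` has length `1`, else `0`. -/
noncomputable def unitMould : Mould := fun w => if w.length = 1 then 1 else 0

/-- Mould composition: `(M∘N)^n = Σ_k Σ* M^{‖ω₁‖·…·‖ω_k‖} N^{ω₁}⋯N^{ω_k}`, the inner sum
over decompositions of `n` into `k` consecutive (nonempty) subwords, `‖ω‖` being the
letter obtained by summing the letters of `ω`. -/
noncomputable def mcomp (M N : Mould) : Mould := fun w =>
  ∑ c : Composition w.length,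
    M ((w.splitWrtComposition c).map List.sum) * ((w.splitWrtComposition c).map N).prod

/-- Iterated self-composition `F^{∘r}` (with `F^{∘0} = F`). -/
noncomputable def miter (F : Mould) : ℕ → Mould
  | 0 => F
  | k + 1 => mcomp F (miter F k)

lemma List.sum_map_sum_splitWrtComposition {M : Type*} [AddMonoid M] (w : List M)
    (c : Composition w.length) : ((w.splitWrtComposition c).map List.sum).sum = w.sum := by
  rw [← List.sum_flatten, List.flatten_splitWrtComposition]

lemma List.splitWrtComposition_single {α : Type*} (l : List α) (h : 0 < l.length) :
    l.splitWrtComposition (Composition.single l.length h) = [l] := by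
  simp [List.splitWrtComposition, Composition.single, List.splitWrtCompositionAux]

lemma mcomp_sub_left (A B N : Mould) (w : List ℂ) :
    mcomp (fun v => A v - B v) N w = mcomp A N w - mcomp B N w := by
  simp only [mcomp, sub_mul, Finset.sum_sub_distrib]

/-- Only the one-block decomposition survives in `I ∘ N`. -/
lemma mcomp_unitMould_left (N : Mould) {w : List ℂ} (hw : w ≠ []) :
    mcomp unitMould N w = N w := by
  have hlen : 0 < w.length := List.length_pos_iff.mpr hw
  have hterm (c : Composition w.length) :
      unitMould ((w.splitWrtComposition c).map List.sum) *
          ((w.splitWrtComposition c).map N).prod =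
        if c = Composition.single w.length hlen then N w else 0 := by
    split_ifs with hc
    · subst hc
      simp [List.splitWrtComposition_single, unitMould]
    · have hc1 : c.length ≠ 1 := fun h1 => hc ((Composition.eq_single_iff_length hlen).mpr h1)
      simp [unitMould, hc1]
  simp only [mcomp, hterm, Finset.sum_ite_eq', Finset.mem_univ, if_true]

lemma mcomp_eq_zero_of_nonresonant {M : Mould} (hM : ∀ w : List ℂ, w.sum ≠ 0 → M w = 0)
    (N : Mould) {w : List ℂ} (hw : w.sum ≠ 0) : mcomp M N w = 0 := by
  refine Finset.sum_eq_zero fun c _ => ?_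
  rw [hM _ (by rwa [List.sum_map_sum_splitWrtComposition]), zero_mul]

lemma miter_unit_sub_apply_of_nonresonant {M : Mould}
    (hM : ∀ w : List ℂ, w.sum ≠ 0 → M w = 0) (n : ℕ) {w : List ℂ} (hw : w.sum ≠ 0) :
    miter (fun v => unitMould v - M v) n w = unitMould w := by
  induction n with
  | zero => simp [miter, hM w hw]
  | succ k ih =>
    have hne : w ≠ [] := by rintro rfl; exact hw List.sum_nil
    rw [miter, mcomp_sub_left, mcomp_unitMould_left _ hne, ih,
      mcomp_eq_zero_of_nonresonant hM _ hw, sub_zero]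

theorem correction_vanishes_on_nonresonant_general (M Carr : Mould)
    (hMnr : ∀ w : List ℂ, w.sum ≠ 0 → M w = 0)
    (hCarr : ∀ (w : List ℂ) (k : ℕ),
      unitMould w - Carr w = miter (fun v => unitMould v - M v) (w.length + k) w) :
    ∀ w : List ℂ, w.sum ≠ 0 → Carr w = 0 := by
  intro w hw
  have h := hCarr w 0
  rw [miter_unit_sub_apply_of_nonresonant hMnr _ hw] at h
  simpa using h

/-- The correction mould vanishes on non-resonant words: if `M` is a prenormal-form mould
(vanishing on the empty word and on non-resonant words) and `Carr` satisfies
`I^n − Carr^n = ((I − M)^{∘(l(n)+k)})^n` for all `k`, then `ω(n) ≠ 0` implies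
`Carr^n = 0`. -/
theorem correction_vanishes_on_nonresonant (M Carr : Mould)
    (hM0 : M [] = 0) (hMnr : ∀ w : List ℂ, w.sum ≠ 0 → M w = 0)
    (hCarr : ∀ (w : List ℂ) (k : ℕ),
      unitMould w - Carr w = miter (fun v => unitMould v - M v) (w.length + k) w) :
    ∀ w : List ℂ, w.sum ≠ 0 → Carr w = 0 :=
  correction_vanishes_on_nonresonant_general M Carr hMnr hCarr
end

section
/- If a word n = n₁·…·n_r (r ≥ 2) contains a letter n_j with ω(n_j) = 0, then Carr^{n} = 0. -/
/-!
Write `F = I − M` and `S = I − Carr`. Since the iterates `F^{∘m}` agree with `S` on words of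
length at most `m`, `S` is a fixed point of `S ↦ F ∘ S`. At the letter `0` this reads
`F^{[0]} F^{[0]} = S^{[0]} = 0`, so `F` vanishes at `0`. Now let `w` contain the letter `0`.
If `‖w‖ ≠ 0`, then `S^w = 0` because `Carr` vanishes on non-resonant words. If `‖w‖ = 0`,
every term of `(F ∘ S)^w` vanishes: the one-block term carries the factor `F^{[‖w‖]} = F^{[0]}`,
and any other splitting has a strictly shorter block containing `0`, on which `S` vanishes by
induction on the length.
-/

namespace List

variable {α : Type*}

theorem splitWrtComposition_single_s13 (l : List α) (hl : 0 < l.length) :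
    l.splitWrtComposition (Composition.single l.length hl) = [l] := by
  simp [splitWrtComposition, Composition.single_blocks, splitWrtCompositionAux]

theorem length_le_of_mem_splitWrtComposition {l p : List α} {c : Composition l.length}
    (hp : p ∈ l.splitWrtComposition c) : p.length ≤ l.length :=
  c.blocks_le (map_length_splitWrtComposition l c ▸ mem_map_of_mem hp)

theorem length_lt_of_mem_splitWrtComposition {l p : List α} {c : Composition l.length}
    (hl : 0 < l.length) (hc : c ≠ Composition.single l.length hl)
    (hp : p ∈ l.splitWrtComposition c) : p.length < l.length := by
  have hb : p.length ∈ c.blocks := map_length_splitWrtComposition l c ▸ mem_map_of_mem hp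
  obtain ⟨i, hi⟩ := mem_iff_get.1 hb
  exact hi ▸ (Composition.ne_single_iff hl).1 hc i

end List

theorem mcomp_singleton (G H : Mould) (a : ℂ) : mcomp G H [a] = G [a] * H [a] := by
  have hsingle : ∀ c : Composition [a].length, c = .single [a].length one_pos := fun c =>
    (Composition.eq_single_iff_length one_pos).2
      (le_antisymm c.length_le (c.length_pos_of_pos one_pos))
  rw [mcomp, Fintype.sum_eq_single _ fun c hc => (hc (hsingle c)).elim,
    List.splitWrtComposition_single_s13]
  simp

theorem mcomp_congr_right (G : Mould) {H H' : Mould} {w : List ℂ}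
    (h : ∀ v : List ℂ, v.length ≤ w.length → H v = H' v) : mcomp G H w = mcomp G H' w := by
  refine Finset.sum_congr rfl fun c _ => ?_
  congr 2
  exact List.map_congr_left fun p hp => h p (List.length_le_of_mem_splitWrtComposition hp)

theorem eq_mcomp_of_miter_eq {F S : Mould}
    (h : ∀ (w : List ℂ) (m : ℕ), w.length ≤ m → miter F m w = S w) (w : List ℂ) :
    S w = mcomp F S w :=
  calc S w = miter F (w.length + 1) w := (h w _ (Nat.le_succ _)).symm
    _ = mcomp F (miter F w.length) w := rfl
    _ = mcomp F S w := mcomp_congr_right F fun v hv => h v _ hv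

theorem eq_zero_of_zero_mem_of_eq_mcomp {F S : Mould} (hfix : ∀ w : List ℂ, S w = mcomp F S w)
    (hF : F [0] = 0) (hnr : ∀ w : List ℂ, w.length ≠ 1 → w.sum ≠ 0 → S w = 0)
    (w : List ℂ) (h0 : (0 : ℂ) ∈ w) : S w = 0 := by
  have hpos : 0 < w.length := List.length_pos_of_mem h0
  by_cases hsum : w.sum = 0
  · rw [hfix w, mcomp]
    refine Finset.sum_eq_zero fun c _ => ?_
    by_cases hc : c = Composition.single w.length hpos
    · subst hc
      simp [List.splitWrtComposition_single_s13, hsum, hF]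
    · obtain ⟨p, hp, hp0⟩ := List.mem_flatten.1 ((w.flatten_splitWrtComposition c).symm ▸ h0)
      have hSp : S p = 0 := eq_zero_of_zero_mem_of_eq_mcomp hfix hF hnr p hp0
      rw [List.prod_eq_zero (List.mem_map.2 ⟨p, hp, hSp⟩), mul_zero]
  · refine hnr w (fun hl => hsum ?_) hsum
    obtain ⟨a, rfl⟩ := List.length_eq_one_iff.1 hl
    simpa [eq_comm] using h0
termination_by w.length
decreasing_by exact List.length_lt_of_mem_splitWrtComposition hpos hc hp

theorem correction_vanishes_on_words_with_resonant_letter_general (M Carr : Mould)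
    (hC1 : ∀ a : ℂ, Carr [a] = if a = 0 then 1 else 0)
    (hCnr : ∀ w : List ℂ, w.sum ≠ 0 → Carr w = 0)
    (hCarr : ∀ (w : List ℂ) (k : ℕ),
      unitMould w - Carr w = miter (fun v => unitMould v - M v) (w.length + k) w) :
    ∀ w : List ℂ, 2 ≤ w.length → (0 : ℂ) ∈ w → Carr w = 0 := by
  set F : Mould := fun v => unitMould v - M v
  set S : Mould := fun v => unitMould v - Carr v with hS
  have hstable : ∀ (w : List ℂ) (m : ℕ), w.length ≤ m → miter F m w = S w := by
    intro w m hm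
    obtain ⟨k, rfl⟩ := Nat.exists_eq_add_of_le hm
    exact (hCarr w k).symm
  have hF0 : F [0] = 0 := by
    have hsq : F [0] * F [0] = S [0] := (mcomp_singleton F F 0).symm.trans (hstable [0] 1 le_rfl)
    simpa [hS, unitMould, hC1] using hsq
  have hnr : ∀ w : List ℂ, w.length ≠ 1 → w.sum ≠ 0 → S w = 0 := by
    intro w hl hsum
    simp [hS, unitMould, hl, hCnr w hsum]
  intro w hw h0
  have hSw := eq_zero_of_zero_mem_of_eq_mcomp (eq_mcomp_of_miter_eq hstable) hF0 hnr w h0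
  simpa [hS, unitMould, show w.length ≠ 1 by omega] using hSw

/-- If a word `n = n₁·…·n_r` with `r ≥ 2` contains a letter of weight zero, then
`Carr^n = 0`. Here `Carr` satisfies `Carr^∅ = 0`, equals `1` on resonant letters and `0`
on non-resonant letters, vanishes on non-resonant words, and satisfies the composition
identity `I^n − Carr^n = ((I − M)^{∘(l(n)+k)})^n` for a prenormal mould `M`. -/
theorem correction_vanishes_on_words_with_resonant_letter (M Carr : Mould)
    (hM0 : M [] = 0) (hMnr : ∀ w : List ℂ, w.sum ≠ 0 → M w = 0)
    (hC0 : Carr [] = 0)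
    (hC1 : ∀ a : ℂ, Carr [a] = if a = 0 then 1 else 0)
    (hCnr : ∀ w : List ℂ, w.sum ≠ 0 → Carr w = 0)
    (hCarr : ∀ (w : List ℂ) (k : ℕ),
      unitMould w - Carr w = miter (fun v => unitMould v - M v) (w.length + k) w) :
    ∀ w : List ℂ, 2 ≤ w.length → (0 : ℂ) ∈ w → Carr w = 0 :=
  correction_vanishes_on_words_with_resonant_letter_general M Carr hC1 hCnr hCarr
end

section
/- The set L_d of isochronous centers of real polynomial perturbations of degree d of the linear center is an affine algebraic variety in ℂ^{N(d)}, defined over ℚ: there exist finitely many polynomials f₁,…,f_s with coefficients in ℚ(i) such that L_d = {p ∈ ℂ^{N(d)} : f_i(p) = 0 for all i}. -/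
/-!
The ideals `⟨a₀, …, a_{k-1}⟩` form an ascending chain in a Noetherian ring (Hilbert's basis
theorem makes `ℂ[p]` one), so the chain stabilizes at some `k`. Every `aₙ` then lies in the ideal
generated by the first `k` of them, hence vanishes wherever these do: the first `k` correction
coefficients already cut out `L_d`, and they have coefficients in `ℚ(i)`.
-/

open MvPolynomial

section Noetherian

variable {R : Type*} [CommRing R] [IsNoetherianRing R]

theorem Ideal.exists_forall_mem_span_image_Iio (a : ℕ → R) :
    ∃ k, ∀ n, a n ∈ Ideal.span (a '' Set.Iio k) := by
  let chain : ℕ →o Ideal R :=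
    ⟨fun k => Ideal.span (a '' Set.Iio k),
      fun _ _ h => Ideal.span_mono (Set.image_mono (Set.Iio_subset_Iio h))⟩
  obtain ⟨k, hk⟩ := WellFoundedGT.monotone_chain_condition chain
  refine ⟨k, fun n => ?_⟩
  rw [show Ideal.span (a '' Set.Iio k) = chain k from rfl, hk (max k (n + 1)) (le_max_left _ _)]
  exact Ideal.subset_span ⟨n, lt_of_lt_of_le n.lt_succ_self (le_max_right _ _), rfl⟩

theorem exists_forall_map_eq_zero_iff_forall_fin {S : Type*} [Semiring S] (a : ℕ → R) :
    ∃ k, ∀ φ : R →+* S, (∀ n, φ (a n) = 0) ↔ ∀ i : Fin k, φ (a i) = 0 := by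
  obtain ⟨k, hk⟩ := Ideal.exists_forall_mem_span_image_Iio a
  refine ⟨k, fun φ => ⟨fun h i => h i, fun h n => ?_⟩⟩
  have hspan : Ideal.span (a '' Set.Iio k) ≤ RingHom.ker φ := by
    rw [Ideal.span_le]
    rintro _ ⟨i, hi, rfl⟩
    exact h ⟨i, hi⟩
  exact hspan (hk n)

end Noetherian

/-- The set of isochronous centers `L_d ⊆ ℂ^{N(d)}` — the common zero set of the
correction coefficients `Ca_{2p}`, which are polynomials in the coefficients with
coefficients in `ℚ(i) = {a + b·i : a, b ∈ ℚ}` — is an affine algebraic variety defined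
over `ℚ(i)`: there are finitely many polynomials `f₁,…,f_s` with coefficients in `ℚ(i)`
whose common zero set is exactly `L_d`. -/
theorem isochronous_centers_affine_variety (N : ℕ) (Ca : ℕ → MvPolynomial (Fin N) ℂ)
    (hCa : ∀ (n : ℕ) (m : Fin N →₀ ℕ),
      (Ca n).coeff m ∈ {z : ℂ | ∃ a b : ℚ, z = (a : ℂ) + (b : ℂ) * Complex.I}) :
    ∃ (s : ℕ) (f : Fin s → MvPolynomial (Fin N) ℂ),
      (∀ (i : Fin s) (m : Fin N →₀ ℕ),
        (f i).coeff m ∈ {z : ℂ | ∃ a b : ℚ, z = (a : ℂ) + (b : ℂ) * Complex.I}) ∧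
      {x : Fin N → ℂ | ∀ n : ℕ, MvPolynomial.eval x (Ca n) = 0} =
        {x : Fin N → ℂ | ∀ i : Fin s, MvPolynomial.eval x (f i) = 0} := by
  obtain ⟨k, hk⟩ := exists_forall_map_eq_zero_iff_forall_fin (S := ℂ) Ca
  exact ⟨k, fun i => Ca i, fun i => hCa i, Set.ext fun x => hk (MvPolynomial.eval x)⟩
end
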